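/- Let F_q be a finite field with q ≡ 1 (mod 3), and a₁,a₂,a₃ ∈ F_q* with a₁a₂a₃ a nonzero cube. Then the number M of solutions (x₁,x₂,x₃) ∈ F_q³ of a₁x₁³ + a₂x₂³ + a₃x₃³ = 0 satisfies M = q² + c(q−1), where c = 2·Re(G(χ,ψ)³)/q for any multiplicative character χ of order 3 and nontrivial additive character ψ; equivalently M = q² + (q−1)(G(χ,ψ)³ + G(χ̄,ψ)³)/q. -/

import Mathlib

/-!
Orthogonality of `ψ` gives `q · M = ∑ₜ ∏ᵢ S(t aᵢ)` with `S(c) = ∑ₓ ψ(c x³)`. Counting cube roots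
with the characters `1, χ, χ²` turns `S(c)`, for `c ≠ 0`, into `χ̄(c) G(χ) + χ(c) G(χ̄)`. In the
expanded product `χ(a₁a₂a₃) = 1` makes the pure terms `G(χ)³, G(χ̄)³` independent of `t`, while
the mixed terms carry a factor `χ(t)` or `χ̄(t)` and cancel in the sum over `t ≠ 0`; the term
`t = 0` contributes `q³`.
-/

open Finset

lemma card_filter_pow_eq_le {A : Type*} [CommRing A] [IsDomain A] [Fintype A] [DecidableEq A]
    {n : ℕ} (hn : 0 < n) (a : A) : #{x | x ^ n = a} ≤ n :=
  calc #{x | x ^ n = a}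
      ≤ (Polynomial.nthRoots n a).toFinset.card :=
        card_le_card fun x hx => by simpa [Polynomial.mem_nthRoots hn] using hx
    _ ≤ n := (Multiset.toFinset_card_le _).trans (Polynomial.card_nthRoots n a)

namespace AddChar

variable {A R : Type*} [CommRing A] [Fintype A] [CommRing R]

lemma card_mul_card_filter_eq_zero_eq_sum [DecidableEq A] [IsDomain R] {X : Type*} [Fintype X]
    {ψ : AddChar A R} (hψ : ψ.IsPrimitive) (f : X → A) :
    (Fintype.card A * #{x | f x = 0} : R) = ∑ t, ∑ x, ψ (t * f x) := by
  rw [sum_comm]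
  simp [sum_mulShift _ hψ, sum_ite, mul_comm]

lemma sum_apply_mul_diagonal (ψ : AddChar A R) (n : ℕ) (a₁ a₂ a₃ t : A) :
    ∑ x : A × A × A, ψ (t * (a₁ * x.1 ^ n + a₂ * x.2.1 ^ n + a₃ * x.2.2 ^ n)) =
      (∑ y, ψ (t * a₁ * y ^ n)) * (∑ y, ψ (t * a₂ * y ^ n)) * ∑ y, ψ (t * a₃ * y ^ n) := by
  simp only [Fintype.sum_prod_type, mul_add, map_add_eq_mul]
  rw [mul_assoc, sum_mul_sum, sum_mul_sum]
  simp only [mul_sum, mul_assoc]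

end AddChar

namespace MulChar

variable {F R : Type*} [Field F] [Fintype F] [CommRing R] (χ : MulChar F R)

lemma apply_pow_orderOf {a : F} (ha : a ≠ 0) : χ a ^ orderOf χ = 1 := by
  rw [← χ.pow_apply' χ.orderOf_pos.ne', pow_orderOf_eq_one, one_apply (Ne.isUnit ha)]

lemma card_pow_orderOf_eq_of_apply_ne_one [DecidableEq F] {a : F} (ha : a ≠ 0) (h : χ a ≠ 1) :
    #{x | x ^ orderOf χ = a} = 0 := by
  refine card_eq_zero.mpr (filter_eq_empty_iff.mpr fun x _ hx => h ?_)
  have hx₀ : x ≠ 0 := by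
    rintro rfl
    exact ha (hx ▸ zero_pow χ.orderOf_pos.ne')
  rw [← hx, map_pow, χ.apply_pow_orderOf hx₀]

variable [IsDomain R]

lemma sum_range_orderOf_pow_apply [DecidableEq R] (a : F) :
    ∑ j ∈ range (orderOf χ), (χ ^ j) a = if χ a = 1 then (orderOf χ : R) else 0 := by
  rcases eq_or_ne a 0 with rfl | ha
  · simp
  have hpow (j : ℕ) : (χ ^ j) a = χ a ^ j := χ.pow_apply_coe j (Ne.isUnit ha).unit
  simp only [hpow]
  split_ifs with h
  · simp [h]
  · have := geom_sum_mul (χ a) (orderOf χ)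
    rw [χ.apply_pow_orderOf ha, sub_self] at this
    exact (mul_eq_zero.mp this).resolve_right (sub_ne_zero.mpr h)

variable [DecidableEq F] [CharZero R]

lemma orderOf_mul_card_apply_eq_one [DecidableEq R] :
    orderOf χ * #{a | χ a = 1} = Fintype.card Fˣ := by
  have hsum : ∑ j ∈ range (orderOf χ), ∑ a, (χ ^ j) a = Fintype.card Fˣ := by
    rw [sum_eq_single_of_mem 0 (mem_range.mpr χ.orderOf_pos), pow_zero,
      sum_one_eq_card_units]
    intro j hj hj₀
    exact sum_eq_zero_of_ne_one (pow_ne_one_of_lt_orderOf hj₀ (mem_range.mp hj))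
  rw [sum_comm] at hsum
  simp only [sum_range_orderOf_pow_apply, sum_ite, sum_const_zero, add_zero, sum_const,
    nsmul_eq_mul] at hsum
  exact_mod_cast (mul_comm _ _).trans hsum

/-- With `n = orderOf χ`, every `x ≠ 0` has `χ (x ^ n) = 1`, so the `q - 1` nonzero elements
are spread over the `(q - 1) / n` fibres above `ker χ`, none of which has more than `n` points. -/
lemma card_pow_orderOf_eq_of_apply_eq_one {a : F} (h : χ a = 1) :
    #{x | x ^ orderOf χ = a} = orderOf χ := by
  classical
  have hfibres : ∑ b ∈ {b | χ b = 1}, #{x | x ^ orderOf χ = b} = Fintype.card Fˣ := by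
    rw [sum_card_fiberwise_eq_card_filter, Fintype.card_units, ← card_univ,
      ← card_erase_of_mem (mem_univ 0), ← filter_ne']
    refine congrArg card (filter_congr fun x _ => ?_)
    rcases eq_or_ne x 0 with rfl | hx
    · simp [zero_pow χ.orderOf_pos.ne']
    · simp [hx, χ.apply_pow_orderOf hx]
  rw [← χ.orderOf_mul_card_apply_eq_one, mul_comm, ← smul_eq_mul, ← sum_const] at hfibres
  exact (sum_eq_sum_iff_of_le fun b _ => card_filter_pow_eq_le χ.orderOf_pos b).mp hfibres a
    (by simpa)

lemma card_pow_orderOf_eq (a : F) :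
    (#{x | x ^ orderOf χ = a} : R) =
      (if a = 0 then 1 else 0) + ∑ j ∈ range (orderOf χ), (χ ^ j) a := by
  classical
  rw [sum_range_orderOf_pow_apply]
  rcases eq_or_ne a 0 with rfl | ha
  · simp [pow_eq_zero_iff χ.orderOf_pos.ne', filter_eq']
  by_cases h : χ a = 1
  · simp [ha, h, card_pow_orderOf_eq_of_apply_eq_one]
  · simp [ha, h, card_pow_orderOf_eq_of_apply_ne_one]

theorem sum_addChar_mul_pow_orderOf {ψ : AddChar F R} (hψ : ψ ≠ 1) {c : F} (hc : c ≠ 0) :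
    ∑ x, ψ (c * x ^ orderOf χ) =
      ∑ j ∈ Ico 1 (orderOf χ), (χ ^ j) c⁻¹ * gaussSum (χ ^ j) ψ := by
  have hψc : ψ.mulShift c ≠ 1 := AddChar.IsPrimitive.of_ne_one hψ hc
  calc ∑ x, ψ (c * x ^ orderOf χ)
      = ∑ a, (#{x | x ^ orderOf χ = a} : R) * ψ (c * a) := by
        rw [← sum_fiberwise univ (fun x => x ^ orderOf χ)]
        refine sum_congr rfl fun a _ => ?_
        rw [sum_congr rfl fun x hx => by rw [(mem_filter.mp hx).2], sum_const, nsmul_eq_mul]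
    _ = ψ (c * 0) + ∑ j ∈ range (orderOf χ), gaussSum (χ ^ j) (ψ.mulShift c) := by
        simp only [card_pow_orderOf_eq, add_mul, sum_add_distrib, ite_mul, one_mul, zero_mul,
          sum_ite_eq', mem_univ, if_true, sum_mul, gaussSum, AddChar.mulShift_apply]
        rw [sum_comm]
    _ = ∑ j ∈ Ico 1 (orderOf χ), (χ ^ j) c⁻¹ * gaussSum (χ ^ j) ψ := by
        rw [range_eq_Ico, sum_eq_sum_Ico_succ_bot χ.orderOf_pos, pow_zero, gaussSum_one_left hψc,
          mul_zero, AddChar.map_zero_eq_one, add_neg_cancel_left]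
        refine sum_congr rfl fun j _ => ?_
        rw [← (Ne.isUnit hc).unit_spec, gaussSum_mulShift_eq, inv_apply', IsUnit.unit_spec]

section Cubic

variable {χ} (hχ : orderOf χ = 3) {ψ : AddChar F R} (hψ : ψ ≠ 1)
include hχ hψ

lemma sum_addChar_mul_cube {c : F} (hc : c ≠ 0) :
    ∑ x, ψ (c * x ^ 3) = χ c ^ 2 * gaussSum χ ψ + χ c * gaussSum (χ ^ 2) ψ := by
  have hc₃ : χ c ^ 3 = 1 := hχ ▸ χ.apply_pow_orderOf hc
  have hinv : χ c⁻¹ = χ c ^ 2 := by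
    have : χ c⁻¹ * χ c = 1 := by rw [← map_mul, inv_mul_cancel₀ hc, map_one]
    linear_combination χ c ^ 2 * this - χ c⁻¹ * hc₃
  rw [← hχ, sum_addChar_mul_pow_orderOf χ hψ hc, hχ, sum_Ico_succ_top (by norm_num),
    sum_Ico_succ_top (by norm_num), Ico_self, sum_empty, zero_add, pow_one,
    pow_apply' χ two_ne_zero, hinv]
  linear_combination χ c * gaussSum (χ ^ 2) ψ * hc₃

theorem sum_prod_sum_addChar_mul_cube {a₁ a₂ a₃ : F} (ha₁ : a₁ ≠ 0) (ha₂ : a₂ ≠ 0)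
    (ha₃ : a₃ ≠ 0) (ha : χ a₁ * χ a₂ * χ a₃ = 1) :
    ∑ t, (∑ y, ψ (t * a₁ * y ^ 3)) * (∑ y, ψ (t * a₂ * y ^ 3)) * ∑ y, ψ (t * a₃ * y ^ 3) =
      Fintype.card F ^ 3 +
        (Fintype.card F - 1) * (gaussSum χ ψ ^ 3 + gaussSum (χ ^ 2) ψ ^ 3) := by
  set g₁ := gaussSum χ ψ
  set g₂ := gaussSum (χ ^ 2) ψ
  set e₁ := χ a₁ + χ a₂ + χ a₃
  set e₂ := χ a₁ * χ a₂ + χ a₁ * χ a₃ + χ a₂ * χ a₃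
  have hterm : ∀ t ∈ univ.erase 0,
      (∑ y, ψ (t * a₁ * y ^ 3)) * (∑ y, ψ (t * a₂ * y ^ 3)) * ∑ y, ψ (t * a₃ * y ^ 3) =
        g₁ ^ 3 + g₂ ^ 3 + (χ ^ 2) t * (g₁ ^ 2 * g₂ * e₂) + χ t * (g₁ * g₂ ^ 2 * e₁) := by
    intro t ht
    have ht₀ := ne_of_mem_erase ht
    have ht₃ : χ t ^ 3 = 1 := hχ ▸ χ.apply_pow_orderOf ht₀
    rw [sum_addChar_mul_cube hχ hψ (mul_ne_zero ht₀ ha₁),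
      sum_addChar_mul_cube hχ hψ (mul_ne_zero ht₀ ha₂),
      sum_addChar_mul_cube hχ hψ (mul_ne_zero ht₀ ha₃), map_mul, map_mul, map_mul,
      pow_apply' χ two_ne_zero]
    linear_combination
      ((χ a₁ * χ a₂ * χ a₃ + 1) * χ t ^ 6 * g₁ ^ 3 + χ t ^ 5 * g₁ ^ 2 * g₂ * e₂
        + χ t ^ 4 * g₁ * g₂ ^ 2 * e₁ + χ t ^ 3 * g₂ ^ 3) * ha
      + (g₁ ^ 3 * (χ t ^ 3 + 1) + χ t ^ 2 * g₁ ^ 2 * g₂ * e₂ + χ t * g₁ * g₂ ^ 2 * e₁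
        + g₂ ^ 3) * ht₃
  have hsum (j : ℕ) (hj₀ : j ≠ 0) (hj : j < 3) : ∑ t ∈ univ.erase 0, (χ ^ j) t = 0 := by
    rw [sum_erase _ (MulChar.map_zero _)]
    exact sum_eq_zero_of_ne_one (pow_ne_one_of_lt_orderOf hj₀ (hχ ▸ hj))
  rw [← add_sum_erase _ _ (mem_univ 0), sum_congr rfl hterm, sum_add_distrib, sum_add_distrib,
    ← sum_mul, ← sum_mul, hsum 2 two_ne_zero (by norm_num), ← pow_one χ,
    hsum 1 one_ne_zero (by norm_num), sum_const, card_erase_of_mem (mem_univ 0), card_univ,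
    nsmul_eq_mul, Nat.cast_sub Fintype.card_pos]
  simp only [zero_mul, AddChar.map_zero_eq_one, sum_const, card_univ, nsmul_eq_mul, mul_one]
  ring

end Cubic

end MulChar

theorem count_diag_cubic_cube_case_general (F : Type*) [Field F] [Fintype F] [DecidableEq F]
    (a₁ a₂ a₃ : F) (ha₁ : a₁ ≠ 0) (ha₂ : a₂ ≠ 0) (ha₃ : a₃ ≠ 0)
    (hcube : ∃ w : F, w ≠ 0 ∧ w ^ 3 = a₁ * a₂ * a₃)
    (χ : MulChar F ℂ) (hχ : orderOf χ = 3)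
    (ψ : AddChar F ℂ) (hψ : ∃ a : F, ψ a ≠ 1) :
    (Fintype.card {x : F × F × F //
        a₁ * x.1 ^ 3 + a₂ * x.2.1 ^ 3 + a₃ * x.2.2 ^ 3 = 0} : ℂ) =
      (Fintype.card F : ℂ) ^ 2 +
        ((Fintype.card F : ℂ) - 1) *
          (gaussSum χ ψ ^ 3 + gaussSum (χ ^ 2) ψ ^ 3) / (Fintype.card F : ℂ) := by
  obtain ⟨w, hw₀, hw⟩ := hcube
  have hψ₁ : ψ ≠ 1 := fun h => hψ.elim fun a ha => ha (by simp [h])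
  have hχa : χ a₁ * χ a₂ * χ a₃ = 1 := by
    rw [← map_mul, ← map_mul, ← hw, map_pow, ← hχ, χ.apply_pow_orderOf hw₀]
  have key := AddChar.card_mul_card_filter_eq_zero_eq_sum (AddChar.IsPrimitive.of_ne_one hψ₁)
    fun x : F × F × F => a₁ * x.1 ^ 3 + a₂ * x.2.1 ^ 3 + a₃ * x.2.2 ^ 3
  simp only [AddChar.sum_apply_mul_diagonal] at key
  rw [MulChar.sum_prod_sum_addChar_mul_cube hχ hψ₁ ha₁ ha₂ ha₃ hχa] at key
  have hq : (Fintype.card F : ℂ) ≠ 0 := Nat.cast_ne_zero.mpr Fintype.card_ne_zero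
  rw [Fintype.card_subtype]
  field_simp
  linear_combination key

/-- For a finite field `F` with `q ≡ 1 (mod 3)` and `a₁a₂a₃` a nonzero cube, the number of
solutions of `a₁x₁³ + a₂x₂³ + a₃x₃³ = 0` equals `q² + (q-1)·(G(χ,ψ)³ + G(χ̄,ψ)³)/q`
for any cubic character `χ` and nontrivial additive character `ψ`. -/
theorem count_diag_cubic_cube_case (F : Type*) [Field F] [Fintype F] [DecidableEq F]
    (hq : Fintype.card F % 3 = 1)
    (a₁ a₂ a₃ : F) (ha₁ : a₁ ≠ 0) (ha₂ : a₂ ≠ 0) (ha₃ : a₃ ≠ 0)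
    (hcube : ∃ w : F, w ≠ 0 ∧ w ^ 3 = a₁ * a₂ * a₃)
    (χ : MulChar F ℂ) (hχ : orderOf χ = 3)
    (ψ : AddChar F ℂ) (hψ : ∃ a : F, ψ a ≠ 1) :
    (Fintype.card {x : F × F × F //
        a₁ * x.1 ^ 3 + a₂ * x.2.1 ^ 3 + a₃ * x.2.2 ^ 3 = 0} : ℂ) =
      (Fintype.card F : ℂ) ^ 2 +
        ((Fintype.card F : ℂ) - 1) *
          (gaussSum χ ψ ^ 3 + gaussSum (χ ^ 2) ψ ^ 3) / (Fintype.card F : ℂ) :=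
  count_diag_cubic_cube_case_general F a₁ a₂ a₃ ha₁ ha₂ ha₃ hcube χ hχ ψ hψ
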